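/- For each n ≥ 2 let x_n be an entrywise-positive eigenvector of the adjacency matrix of the complete split graph S(n, n). Then the principal ratio γ(S(n,n)) = (max_v x_n(v))/(min_v x_n(v)) tends to the golden ratio φ = (1 + √5)/2 as n → ∞. -/

import Mathlib

/-!
A positive eigenvector `x` of `S(n, m)` (eigenvalue `λ`) is constant on each part: on the clique
`(λ + 1) x_v` is the total mass of `x`, on the independent set `λ x_v` is the mass of the clique.
Writing `a` and `b` for the two values, `λ a = (n - 1) a + m b` and `λ b = n a`; eliminating `λ`
gives `n r² = (n - 1) r + m` for `r = a / b`, whence `r ≥ 1`, `r` is the principal ratio, and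
`r = (c + √(c² + 4m/n)) / 2` with `c = (n - 1)/n`. For `m = n` this is a continuous function of
`c → 1`, whose value at `1` is the positive root of `r² = r + 1`.
-/

open scoped Classical
open Matrix Filter Topology

/-- The complete split graph `S(n,m) = K_{n+m} − K_m`: a clique of `n` vertices
(the left summand) completely joined to an independent set of `m` vertices
(the right summand). -/
def completeSplitGraph (n m : ℕ) : SimpleGraph (Fin n ⊕ Fin m) where
  Adj u v := u ≠ v ∧ (u.isLeft ∨ v.isLeft)
  symm := by
    constructor
    rintro u v ⟨h1, h2⟩
    exact ⟨h1.symm, h2.symm⟩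
  loopless := by
    constructor
    rintro u ⟨h, -⟩
    exact h rfl

variable {n m : ℕ}

@[simp] lemma completeSplitGraph_adj_inl_inl {i j : Fin n} :
    (completeSplitGraph n m).Adj (.inl i) (.inl j) ↔ i ≠ j := by
  simp [completeSplitGraph]

@[simp] lemma completeSplitGraph_adj_inl_inr (i : Fin n) (k : Fin m) :
    (completeSplitGraph n m).Adj (.inl i) (.inr k) := by
  simp [completeSplitGraph]

@[simp] lemma completeSplitGraph_adj_inr_inl (k : Fin m) (i : Fin n) :
    (completeSplitGraph n m).Adj (.inr k) (.inl i) := by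
  simp [completeSplitGraph]

@[simp] lemma completeSplitGraph_not_adj_inr_inr (k l : Fin m) :
    ¬ (completeSplitGraph n m).Adj (.inr k) (.inr l) := by
  simp [completeSplitGraph]

lemma completeSplitGraph_mulVec_inl {R : Type*} [Ring R] (x : Fin n ⊕ Fin m → R) (i : Fin n) :
    ((completeSplitGraph n m).adjMatrix R *ᵥ x) (.inl i) =
      ∑ j, x (.inl j) - x (.inl i) + ∑ k, x (.inr k) := by
  simp only [mulVec, dotProduct, SimpleGraph.adjMatrix_apply, Fintype.sum_sum_type]
  simp [Finset.sum_ite, Finset.filter_ne]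

lemma completeSplitGraph_mulVec_inr {R : Type*} [NonAssocSemiring R] (x : Fin n ⊕ Fin m → R)
    (k : Fin m) :
    ((completeSplitGraph n m).adjMatrix R *ᵥ x) (.inr k) = ∑ j, x (.inl j) := by
  simp only [mulVec, dotProduct, SimpleGraph.adjMatrix_apply, Fintype.sum_sum_type]
  simp

section Eigenvector

variable {x : Fin n ⊕ Fin m → ℝ} {lam : ℝ}

lemma completeSplitGraph_eigen_inl
    (heig : (completeSplitGraph n m).adjMatrix ℝ *ᵥ x = lam • x) (i : Fin n) :
    lam * x (.inl i) = ∑ j, x (.inl j) - x (.inl i) + ∑ k, x (.inr k) := by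
  simpa only [completeSplitGraph_mulVec_inl, Pi.smul_apply, smul_eq_mul] using
    (congrFun heig (.inl i)).symm

lemma completeSplitGraph_eigen_inr
    (heig : (completeSplitGraph n m).adjMatrix ℝ *ᵥ x = lam • x) (k : Fin m) :
    lam * x (.inr k) = ∑ j, x (.inl j) := by
  simpa only [completeSplitGraph_mulVec_inr, Pi.smul_apply, smul_eq_mul] using
    (congrFun heig (.inr k)).symm

lemma completeSplitGraph_eigenvector_inl_eq (hx : ∀ v, 0 < x v)
    (heig : (completeSplitGraph n m).adjMatrix ℝ *ᵥ x = lam • x) (i j : Fin n) :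
    x (.inl i) = x (.inl j) := by
  have hmass : ∀ i, (lam + 1) * x (.inl i) = ∑ j, x (.inl j) + ∑ k, x (.inr k) := fun i => by
    linear_combination completeSplitGraph_eigen_inl heig i
  have hpos : 0 < ∑ j, x (.inl j) + ∑ k, x (.inr k) :=
    add_pos_of_pos_of_nonneg (Finset.sum_pos (fun j _ => hx (.inl j)) ⟨i, Finset.mem_univ i⟩)
      (Finset.sum_nonneg fun k _ => (hx (.inr k)).le)
  have hlam : lam + 1 ≠ 0 := by
    rintro h0
    linarith [hmass i, h0 ▸ zero_mul (x (.inl i))]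
  exact mul_left_cancel₀ hlam ((hmass i).trans (hmass j).symm)

lemma completeSplitGraph_eigenvector_inr_eq [NeZero n] (hx : ∀ v, 0 < x v)
    (heig : (completeSplitGraph n m).adjMatrix ℝ *ᵥ x = lam • x) (k l : Fin m) :
    x (.inr k) = x (.inr l) := by
  have hpos : 0 < ∑ j, x (.inl j) := Finset.sum_pos (fun j _ => hx (.inl j)) Finset.univ_nonempty
  have hlam : lam ≠ 0 := by
    rintro rfl
    linarith [completeSplitGraph_eigen_inr heig k, zero_mul (x (.inr k))]
  exact mul_left_cancel₀ hlam
    ((completeSplitGraph_eigen_inr heig k).trans (completeSplitGraph_eigen_inr heig l).symm)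

end Eigenvector

lemma eq_add_sqrt_div_two_of_sq_eq {c d r : ℝ} (hr : 0 < r) (hd : 0 ≤ d)
    (h : r ^ 2 = c * r + d) : r = (c + √(c ^ 2 + 4 * d)) / 2 := by
  have hrc : c ≤ r := by nlinarith
  rw [show c ^ 2 + 4 * d = (2 * r - c) ^ 2 by linear_combination (-4) * h,
    Real.sqrt_sq (by linarith)]
  ring

theorem completeSplitGraph_iSup_div_iInf [NeZero n] [NeZero m] {x : Fin n ⊕ Fin m → ℝ} {lam : ℝ}
    (hx : ∀ v, 0 < x v) (heig : (completeSplitGraph n m).adjMatrix ℝ *ᵥ x = lam • x) :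
    (⨆ v, x v) / (⨅ v, x v) =
      (((n : ℝ) - 1) / n + √((((n : ℝ) - 1) / n) ^ 2 + 4 * (m / n))) / 2 := by
  set a := x (.inl 0)
  set b := x (.inr 0)
  have ha : 0 < a := hx _
  have hb : 0 < b := hx _
  have hxa : ∀ i, x (.inl i) = a := fun i => completeSplitGraph_eigenvector_inl_eq hx heig i 0
  have hxb : ∀ k, x (.inr k) = b := fun k => completeSplitGraph_eigenvector_inr_eq hx heig k 0
  have hclique : lam * a = n * a - a + m * b := by
    simpa [hxa, hxb] using completeSplitGraph_eigen_inl heig 0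
  have hindep : lam * b = n * a := by
    simpa [hxa] using completeSplitGraph_eigen_inr heig 0
  have hquad : n * a ^ 2 = (n - 1) * a * b + m * b ^ 2 := by
    linear_combination b * hclique - a * hindep
  have hn : (1 : ℝ) ≤ n := by exact_mod_cast NeZero.one_le
  have hm : (1 : ℝ) ≤ m := by exact_mod_cast NeZero.one_le
  have hba : b ≤ a := by
    by_contra! hab
    nlinarith [mul_le_mul_of_nonneg_left hab.le (mul_nonneg (sub_nonneg.2 hn) ha.le),
      mul_le_mul_of_nonneg_right hm (sq_nonneg b), mul_lt_mul'' hab hab ha.le ha.le]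
  have hsup : ⨆ v, x v = a := IsGreatest.csSup_eq ⟨⟨.inl 0, rfl⟩, by
    rintro _ ⟨i | k, rfl⟩ <;> simp [hxa, hxb, hba]⟩
  have hinf : ⨅ v, x v = b := IsLeast.csInf_eq ⟨⟨.inr 0, rfl⟩, by
    rintro _ ⟨i | k, rfl⟩ <;> simp [hxa, hxb, hba]⟩
  rw [hsup, hinf]
  refine eq_add_sqrt_div_two_of_sq_eq (div_pos ha hb) (by positivity) ?_
  field_simp
  linear_combination hquad

/-- If `xₙ` is an entrywise-positive adjacency eigenvector of the complete split
graph `S(n, n)`, then the principal ratio `γ(S(n,n)) = (max xₙ)/(min xₙ)` tends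
to the golden ratio `φ = (1 + √5)/2` as `n → ∞`. -/
theorem stmt9
    (x : (n : ℕ) → (Fin n ⊕ Fin n) → ℝ) (lam : ℕ → ℝ)
    (hx : ∀ n, 2 ≤ n → ∀ v, 0 < x n v)
    (heig : ∀ n, 2 ≤ n →
      (completeSplitGraph n n).adjMatrix ℝ *ᵥ x n = lam n • x n) :
    Tendsto (fun n => (⨆ v, x n v) / (⨅ v, x n v)) atTop
      (𝓝 ((1 + Real.sqrt 5) / 2)) := by
  have hc : Tendsto (fun n : ℕ => ((n : ℝ) - 1) / n) atTop (𝓝 1) := by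
    have h := (tendsto_const_nhds (x := (1 : ℝ))).sub tendsto_one_div_atTop_nhds_zero_nat
    rw [sub_zero] at h
    refine h.congr' ?_
    filter_upwards [eventually_ne_atTop 0] with n hn
    rw [sub_div, div_self (Nat.cast_ne_zero.2 hn), one_div]
  have hroot : Continuous fun c : ℝ => (c + √(c ^ 2 + 4)) / 2 := by fun_prop
  have hlim := (hroot.tendsto 1).comp hc
  rw [show (1 + √((1 : ℝ) ^ 2 + 4)) / 2 = (1 + √5) / 2 by norm_num] at hlim
  refine hlim.congr' ?_
  filter_upwards [eventually_ge_atTop 2] with n hn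
  have : NeZero n := ⟨by omega⟩
  rw [completeSplitGraph_iSup_div_iInf (hx n hn) (heig n hn), div_self (by positivity), mul_one]
  rfl
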